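/- Let α ∈ ℝ, Φ ∈ ℝ, τ > 0 and t ≥ τ. Let u : ℝ → ℝ be continuous and let y : ℝ → ℝ be differentiable with ẏ(σ) = Φ + α·u(σ) for all σ in the window [t − τ, t]. Then the algebraic real-time estimator recovers Φ exactly: Φ = −(6/τ³) · ∫₀^τ [ (τ − 2σ)·y(t − τ + σ) + α·σ·(τ − σ)·u(t − τ + σ) ] dσ. -/

import Mathlib

/-!
The weight `σ (τ - σ)` vanishes at both ends of the window and has derivative `τ - 2σ`, so
integrating by parts turns `∫ (τ - 2σ) y` into `-∫ σ (τ - σ) ẏ`. Inserting the model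
`ẏ = Φ + α u` cancels the input term, and what remains is `-Φ ∫₀^τ σ (τ - σ) dσ = -Φ τ³/6`.
-/

open intervalIntegral
open MeasureTheory (volume)

theorem integral_mul_sub_self (τ : ℝ) : ∫ σ in (0 : ℝ)..τ, σ * (τ - σ) = τ ^ 3 / 6 := by
  simp only [mul_sub, ← sq]
  rw [integral_sub ((by fun_prop : Continuous fun σ : ℝ => σ * τ).intervalIntegrable _ _)
    ((by fun_prop : Continuous fun σ : ℝ => σ ^ 2).intervalIntegrable _ _),
    integral_mul_const, integral_id, integral_pow]
  ring

theorem integral_sub_two_mul_mul_eq_neg_integral {z z' : ℝ → ℝ} {τ : ℝ}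
    (hz : ∀ σ ∈ Set.uIcc 0 τ, HasDerivAt z (z' σ) σ) (hz' : IntervalIntegrable z' volume 0 τ) :
    ∫ σ in (0 : ℝ)..τ, (τ - 2 * σ) * z σ = -∫ σ in (0 : ℝ)..τ, σ * (τ - σ) * z' σ := by
  have hweight : ∀ σ ∈ Set.uIcc 0 τ, HasDerivAt (fun s => s * (τ - s)) (τ - 2 * σ) σ :=
    fun σ _ => ((hasDerivAt_id' σ).mul ((hasDerivAt_id' σ).const_sub τ)).congr_deriv (by ring)
  rw [integral_mul_deriv_eq_deriv_mul hweight hz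
    ((by fun_prop : Continuous fun σ : ℝ => τ - 2 * σ).intervalIntegrable _ _) hz']
  ring

theorem integral_estimator_eq_of_hasDerivAt {z v : ℝ → ℝ} {α Φ τ : ℝ}
    (hz : ∀ σ ∈ Set.uIcc 0 τ, HasDerivAt z (Φ + α * v σ) σ)
    (hv : IntervalIntegrable v volume 0 τ) :
    ∫ σ in (0 : ℝ)..τ, ((τ - 2 * σ) * z σ + α * σ * (τ - σ) * v σ) = -(τ ^ 3 / 6 * Φ) := by
  have hz_cont : ContinuousOn z (Set.uIcc 0 τ) :=
    fun σ hσ => (hz σ hσ).continuousAt.continuousWithinAt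
  have hv_weighted : IntervalIntegrable (fun σ => α * σ * (τ - σ) * v σ) volume 0 τ :=
    hv.continuousOn_mul (by fun_prop)
  have hsplit : ∫ σ in (0 : ℝ)..τ, σ * (τ - σ) * (Φ + α * v σ) =
      (∫ σ in (0 : ℝ)..τ, σ * (τ - σ)) * Φ + ∫ σ in (0 : ℝ)..τ, α * σ * (τ - σ) * v σ := by
    rw [← integral_mul_const, ← integral_add
      ((by fun_prop : Continuous fun σ : ℝ => σ * (τ - σ) * Φ).intervalIntegrable _ _) hv_weighted]
    exact integral_congr fun σ _ => by ring
  rw [integral_add (hz_cont.intervalIntegrable.continuousOn_mul (by fun_prop)) hv_weighted,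
    integral_sub_two_mul_mul_eq_neg_integral hz (intervalIntegrable_const.add (hv.const_mul α)),
    hsplit, integral_mul_sub_self]
  ring

theorem mfc_first_estimator_exact_general
    (α Φ τ t : ℝ) (hτ : 0 < τ)
    (u y : ℝ → ℝ) (hu : Continuous u) (hy : Differentiable ℝ y)
    (hmodel : ∀ σ ∈ Set.Icc (t - τ) t, deriv y σ = Φ + α * u σ) :
    Φ = -(6 / τ ^ 3) *
        ∫ σ in (0 : ℝ)..τ,
          ((τ - 2 * σ) * y (t - τ + σ) + α * σ * (τ - σ) * u (t - τ + σ)) := by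
  have hwindow : ∀ σ ∈ Set.uIcc 0 τ,
      HasDerivAt (fun s => y (t - τ + s)) (Φ + α * u (t - τ + σ)) σ := by
    intro σ hσ
    rw [Set.uIcc_of_le hτ.le] at hσ
    rw [← hmodel _ ⟨by linarith [hσ.1], by linarith [hσ.2]⟩]
    exact (hy _).hasDerivAt.comp_const_add (t - τ) σ
  rw [integral_estimator_eq_of_hasDerivAt hwindow
    ((hu.comp (continuous_const_add _)).intervalIntegrable _ _)]
  field_simp

/-- Exactness of the first algebraic estimator of the model-free control
scheme: if `ẏ(σ) = Φ + α u(σ)` on the window `[t − τ, t]`, then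
`Φ = −(6/τ³) ∫₀^τ [(τ − 2σ) y(t − τ + σ) + α σ (τ − σ) u(t − τ + σ)] dσ`. -/
theorem mfc_first_estimator_exact
    (α Φ τ t : ℝ) (hτ : 0 < τ) (ht : τ ≤ t)
    (u y : ℝ → ℝ) (hu : Continuous u) (hy : Differentiable ℝ y)
    (hmodel : ∀ σ ∈ Set.Icc (t - τ) t, deriv y σ = Φ + α * u σ) :
    Φ = -(6 / τ ^ 3) *
        ∫ σ in (0 : ℝ)..τ,
          ((τ - 2 * σ) * y (t - τ + σ) + α * σ * (τ - σ) * u (t - τ + σ)) :=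
  mfc_first_estimator_exact_general α Φ τ t hτ u y hu hy hmodel
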